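/- Let P = conv((0,1,1),(1,0,1),(1,1,0),(−1,0,0),(0,−1,0),(0,0,−1)) ⊂ ℝ^3 (a lattice triangular prism). Then the only lattice points of P are its six vertices and the origin, the point (1,1,1) lies in 2P ∩ ℤ^3, and (1,1,1) is not the sum of two points of P ∩ ℤ^3; in particular, P is not IDP and has no unimodular cover. -/

import Mathlib

/-!
Every lattice point of `prismP` satisfies the facet inequalities of the prism, which leave only the
six vertices and the origin; in particular its coordinate sum lies in `{-1, 0, 2}`, so no two
lattice points of `prismP` add up to `(1, 1, 1)`, although `(1/2, 1/2, 1/2) ∈ prismP`. This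
contradicts IDP at `n = 2`. In a unimodular cover, `(1/2, 1/2, 1/2)` would lie in a unimodular
tetrahedron with vertices in `prismP ∩ ℤ³`. As the edge vectors of a unimodular simplex form a
`ℤ`-basis, twice the barycentric coordinates of a half-integral point are nonnegative integers
summing to `2`, so `(1, 1, 1)` would again be the sum of two such vertices.
-/

open scoped Pointwise

noncomputable section

/-- The real point corresponding to an integer point of `ℤ³`. -/
def toR3 (v : Fin 3 → ℤ) : Fin 3 → ℝ := fun i => (v i : ℝ)

/-- The set of lattice points of `ℝ³`. -/
def Lat3 : Set (Fin 3 → ℝ) := Set.range toR3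

/-- A unimodular tetrahedron: the convex hull of lattice points `v0, v1, v2, v3`
such that `v1 - v0, v2 - v0, v3 - v0` form a `ℤ`-basis of `ℤ³`. -/
def IsUnimodularTet (S : Set (Fin 3 → ℝ)) : Prop :=
  ∃ v : Fin 4 → Fin 3 → ℤ,
    S = convexHull ℝ {toR3 (v 0), toR3 (v 1), toR3 (v 2), toR3 (v 3)} ∧
    (Matrix.of ![v 1 - v 0, v 2 - v 0, v 3 - v 0]).det ∈ ({1, -1} : Set ℤ)

/-- A unimodular cover of `P`. -/
def HasUnimodularCover (P : Set (Fin 3 → ℝ)) : Prop :=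
  ∃ 𝒞 : Set (Set (Fin 3 → ℝ)),
    (∀ S ∈ 𝒞, IsUnimodularTet S ∧ S ⊆ P) ∧ ⋃₀ 𝒞 = P

/-- A polytope `R ⊆ ℝ³` is IDP if every lattice point of `nR` is a sum of `n`
lattice points of `R`, for every positive integer `n`. -/
def IsIDP3 (R : Set (Fin 3 → ℝ)) : Prop :=
  ∀ n : ℕ, 0 < n → ∀ z : Fin 3 → ℤ, toR3 z ∈ (n : ℝ) • R →
    ∃ f : Fin n → Fin 3 → ℤ, (∀ i, toR3 (f i) ∈ R) ∧ z = ∑ i, f i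

/-- The triangular prism of Example 3 in the paper. -/
def prismP : Set (Fin 3 → ℝ) :=
  convexHull ℝ {![0,1,1], ![1,0,1], ![1,1,0], ![-1,0,0], ![0,-1,0], ![0,0,-1]}

open Set Matrix

theorem mem_convexHull_range_iff_exists_weights {E ι : Type*} [AddCommGroup E] [Module ℝ E]
    [Fintype ι] {v : ι → E} {x : E} :
    x ∈ convexHull ℝ (range v) ↔
      ∃ w : ι → ℝ, (∀ i, 0 ≤ w i) ∧ ∑ i, w i = 1 ∧ ∑ i, w i • v i = x := by
  classical
  have : range v = Fintype.linearCombination ℝ v '' range (fun i => Pi.single i 1) := by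
    rw [← range_comp]; congr 1; ext i; simp
  rw [this, ← LinearMap.image_convexHull, convexHull_rangle_single_eq_stdSimplex]
  simp [stdSimplex, Fintype.linearCombination_apply, and_assoc]

theorem exists_add_eq_sum_nsmul_of_sum_eq_two {ι M : Type*} [Fintype ι] [AddCommMonoid M]
    (v : ι → M) {N : ι → ℕ} (hN : ∑ i, N i = 2) : ∃ i j, ∑ k, N k • v k = v i + v j := by
  set s : Multiset ι := ∑ k, Multiset.replicate (N k) k with hs
  obtain ⟨i, j, hij⟩ : ∃ i j, s = {i, j} := Multiset.card_eq_two.mp (by simp [hs, hN])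
  refine ⟨i, j, ?_⟩
  have : (s.map v).sum = ∑ k, N k • v k := by
    simp [hs, ← Multiset.coe_mapAddMonoidHom, map_sum, Multiset.sum_sum]
  rw [← this, hij]; simp

theorem Matrix.eq_intCast_of_vecMul_map_intCast {n : Type*} [Fintype n] [DecidableEq n]
    {A : Matrix n n ℤ} (hA : IsUnit A.det) {c : n → ℝ} {y : n → ℤ}
    (h : c ᵥ* A.map Int.cast = Int.cast ∘ y) : c = Int.cast ∘ (y ᵥ* A⁻¹) := by
  have hinv : A.map Int.cast * A⁻¹.map Int.cast = (1 : Matrix n n ℝ) := by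
    have := (Matrix.map_mul (L := A) (M := A⁻¹) (f := Int.castRingHom ℝ)).symm
    simpa [A.mul_nonsing_inv hA] using this
  ext i
  calc c i = (c ᵥ* (A.map Int.cast * A⁻¹.map Int.cast)) i := by rw [hinv, vecMul_one]
    _ = ((Int.cast ∘ y) ᵥ* A⁻¹.map Int.cast) i := by rw [← vecMul_vecMul, h]
    _ = _ := ((Int.castRingHom ℝ).map_vecMul A⁻¹ y i).symm

def IsUnimodularSimplex {n : ℕ} (v : Fin (n + 1) → Fin n → ℤ) : Prop :=
  IsUnit (Matrix.of fun i : Fin n => v i.succ - v 0).det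

theorem IsUnimodularSimplex.exists_weights_eq_intCast {n : ℕ} {v : Fin (n + 1) → Fin n → ℤ}
    (hv : IsUnimodularSimplex v) {w : Fin (n + 1) → ℝ} {s : ℤ} (hw : ∑ i, w i = s)
    {z : Fin n → ℤ} (hz : ∑ i, w i • (Int.cast ∘ v i : Fin n → ℝ) = Int.cast ∘ z) :
    ∃ m : Fin (n + 1) → ℤ, w = Int.cast ∘ m := by
  classical
  set A : Matrix (Fin n) (Fin n) ℤ := Matrix.of fun i => v i.succ - v 0
  -- `w 1, …, w n` are the coordinates of `z - s • v 0` in the basis of edge vectors at `v 0`.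
  have hA : (fun i => w i.succ) ᵥ* A.map Int.cast = Int.cast ∘ (z - s • v 0) := by
    ext j
    have hzj := congrFun hz j
    rw [Fin.sum_univ_succ] at hw
    simp only [Finset.sum_apply, Pi.smul_apply, Function.comp_apply, smul_eq_mul,
      Fin.sum_univ_succ] at hzj
    simp only [vecMul, dotProduct, A, map_apply, of_apply, Pi.sub_apply, Function.comp_apply,
      Pi.smul_apply, smul_eq_mul, Int.cast_sub, Int.cast_mul, mul_sub, Finset.sum_sub_distrib,
      ← Finset.sum_mul]
    linear_combination hzj - (v 0 j : ℝ) * hw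
  set m := (z - s • v 0) ᵥ* A⁻¹
  have hsucc : ∀ i, w i.succ = m i :=
    fun i => congrFun (Matrix.eq_intCast_of_vecMul_map_intCast hv hA) i
  refine ⟨Fin.cons (s - ∑ i, m i) m, funext fun i => ?_⟩
  cases i using Fin.cases with
  | zero =>
    rw [Fin.sum_univ_succ] at hw
    simp only [hsucc] at hw
    simp only [Function.comp_apply, Fin.cons_zero]
    push_cast
    linarith
  | succ i => simp [hsucc]

theorem IsUnimodularSimplex.exists_add_eq_of_two_smul_mem_convexHull {n : ℕ}
    {v : Fin (n + 1) → Fin n → ℤ} (hv : IsUnimodularSimplex v) {x : Fin n → ℝ}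
    (hx : x ∈ convexHull ℝ (range fun i => (Int.cast ∘ v i : Fin n → ℝ))) {z : Fin n → ℤ}
    (hxz : (2 : ℝ) • x = Int.cast ∘ z) : ∃ i j, v i + v j = z := by
  obtain ⟨w, hw0, hw1, rfl⟩ := mem_convexHull_range_iff_exists_weights.mp hx
  have hz : ∑ i, (2 * w i) • (Int.cast ∘ v i : Fin n → ℝ) = Int.cast ∘ z := by
    simp only [← hxz, Finset.smul_sum, smul_smul]
  obtain ⟨m, hm⟩ := hv.exists_weights_eq_intCast (w := fun i => 2 * w i) (s := 2)
    (by simp [← Finset.mul_sum, hw1]) hz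
  lift m to Fin (n + 1) → ℕ using fun i => by
    have h : 2 * w i = m i := congrFun hm i
    exact_mod_cast (show (0 : ℝ) ≤ m i by linarith [hw0 i])
  have hm' : ∀ i, 2 * w i = m i := fun i => by simpa using congrFun hm i
  have hsum : ∑ i, m i = 2 := by
    have : ∑ i, (m i : ℝ) = 2 := by simp [← hm', ← Finset.mul_sum, hw1]
    exact_mod_cast this
  obtain ⟨i, j, hij⟩ := exists_add_eq_sum_nsmul_of_sum_eq_two v hsum
  refine ⟨i, j, ?_⟩
  rw [← hij]
  ext k
  have := congrFun hz k
  simp only [Finset.sum_apply, Pi.smul_apply, Function.comp_apply, smul_eq_mul, hm'] at this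
  simp only [Finset.sum_apply, Pi.smul_apply]
  exact_mod_cast this

-- The facet inequalities of `prismP`: its two triangles and its three quadrilateral sides.
def PrismIneqs {R : Type*} [Ring R] [LE R] (x : Fin 3 → R) : Prop :=
  -1 ≤ x 0 + x 1 + x 2 ∧ x 0 + x 1 + x 2 ≤ 2 ∧
    -1 ≤ x 0 + x 1 - 2 * x 2 ∧ -1 ≤ x 0 - 2 * x 1 + x 2 ∧ -1 ≤ -2 * x 0 + x 1 + x 2

theorem convex_setOf_prismIneqs : Convex ℝ {x : Fin 3 → ℝ | PrismIneqs x} := by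
  rintro x ⟨h1, h2, h3, h4, h5⟩ y ⟨g1, g2, g3, g4, g5⟩ a b ha hb hab
  simp only [PrismIneqs, Set.mem_ofPred_eq, Pi.add_apply, Pi.smul_apply, smul_eq_mul]
  refine ⟨?_, ?_, ?_, ?_, ?_⟩ <;> nlinarith

theorem prismP_subset_setOf_prismIneqs : prismP ⊆ {x | PrismIneqs x} := by
  refine convexHull_min ?_ convex_setOf_prismIneqs
  rintro x (rfl | rfl | rfl | rfl | rfl | rfl) <;> simp [PrismIneqs] <;> norm_num

theorem prismIneqs_toR3 {z : Fin 3 → ℤ} : PrismIneqs (toR3 z) ↔ PrismIneqs z := by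
  simp only [PrismIneqs, toR3]
  norm_cast

theorem prismIneqs_of_toR3_mem_prismP {z : Fin 3 → ℤ} (hz : toR3 z ∈ prismP) : PrismIneqs z :=
  prismIneqs_toR3.mp (prismP_subset_setOf_prismIneqs hz)

def prismVertices : Fin 6 → Fin 3 → ℝ :=
  ![![0,1,1], ![1,0,1], ![1,1,0], ![-1,0,0], ![0,-1,0], ![0,0,-1]]

theorem prismP_eq_convexHull_range : prismP = convexHull ℝ (range prismVertices) := by
  simp only [prismP, prismVertices, Matrix.range_cons, Matrix.range_empty, Set.union_empty,
    Set.singleton_union]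

theorem sum_smul_prismVertices_mem_prismP {w : Fin 6 → ℝ} (hw0 : ∀ i, 0 ≤ w i)
    (hw1 : ∑ i, w i = 1) : ∑ i, w i • prismVertices i ∈ prismP := by
  rw [prismP_eq_convexHull_range]
  exact mem_convexHull_range_iff_exists_weights.mpr ⟨w, hw0, hw1, rfl⟩

theorem zero_mem_prismP : (![0, 0, 0] : Fin 3 → ℝ) ∈ prismP := by
  convert sum_smul_prismVertices_mem_prismP (w := ![1/3, 0, 0, 0, 1/3, 1/3])
    (by intro i; fin_cases i <;> norm_num) (by simp [Fin.sum_univ_six]; norm_num) using 1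
  ext i; fin_cases i <;> simp [Fin.sum_univ_six, prismVertices]

theorem toR3_injective : Function.Injective toR3 :=
  fun _ _ h => funext fun i => Int.cast_injective (congrFun h i)

theorem toR3_add (a b : Fin 3 → ℤ) : toR3 (a + b) = toR3 a + toR3 b := by
  ext i; simp [toR3]

theorem toR3_vec3 (a b c : ℤ) : toR3 ![a, b, c] = ![(a : ℝ), b, c] := by
  ext i; fin_cases i <;> rfl

theorem toR3_mem_prismP_iff {z : Fin 3 → ℤ} : toR3 z ∈ prismP ↔
    z ∈ ({![0,1,1], ![1,0,1], ![1,1,0], ![-1,0,0], ![0,-1,0], ![0,0,-1], ![0,0,0]} :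
      Set (Fin 3 → ℤ)) := by
  constructor
  · intro hz
    obtain ⟨a, b, c, rfl⟩ : ∃ a b c : ℤ, z = ![a, b, c] :=
      ⟨z 0, z 1, z 2, by ext i; fin_cases i <;> rfl⟩
    obtain ⟨h1, h2, h3, h4, h5⟩ := prismIneqs_of_toR3_mem_prismP hz
    simp only [Matrix.cons_val] at h1 h2 h3 h4 h5
    have : (a = 0 ∧ b = 1 ∧ c = 1) ∨ (a = 1 ∧ b = 0 ∧ c = 1) ∨ (a = 1 ∧ b = 1 ∧ c = 0) ∨
        (a = -1 ∧ b = 0 ∧ c = 0) ∨ (a = 0 ∧ b = -1 ∧ c = 0) ∨ (a = 0 ∧ b = 0 ∧ c = -1) ∨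
        (a = 0 ∧ b = 0 ∧ c = 0) := by omega
    rcases this with ⟨rfl, rfl, rfl⟩ | ⟨rfl, rfl, rfl⟩ | ⟨rfl, rfl, rfl⟩ | ⟨rfl, rfl, rfl⟩ |
      ⟨rfl, rfl, rfl⟩ | ⟨rfl, rfl, rfl⟩ | ⟨rfl, rfl, rfl⟩ <;> simp
  · rintro (rfl | rfl | rfl | rfl | rfl | rfl | rfl) <;> rw [toR3_vec3] <;> push_cast <;>
      first | exact zero_mem_prismP | exact subset_convexHull ℝ _ (by simp)

theorem prismP_inter_Lat3 : prismP ∩ Lat3 =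
    {![0,1,1], ![1,0,1], ![1,1,0], ![-1,0,0], ![0,-1,0], ![0,0,-1], ![0,0,0]} := by
  have : prismP ∩ Lat3 = toR3 '' {![0,1,1], ![1,0,1], ![1,1,0], ![-1,0,0], ![0,-1,0],
      ![0,0,-1], ![0,0,0]} := by
    ext x
    constructor
    · rintro ⟨hx, z, rfl⟩
      exact ⟨z, toR3_mem_prismP_iff.mp hx, rfl⟩
    · rintro ⟨z, hz, rfl⟩
      exact ⟨toR3_mem_prismP_iff.mpr hz, z, rfl⟩
  simp [this, Set.image_insert_eq, toR3_vec3]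

-- The coordinate sum of a lattice point of `prismP` lies in `{-1, 0, 2}`, so no two add up to `3`.
theorem not_exists_toR3_mem_prismP_add_eq_one_one_one :
    ¬ ∃ a b : Fin 3 → ℤ, toR3 a ∈ prismP ∧ toR3 b ∈ prismP ∧ a + b = ![1, 1, 1] := by
  rintro ⟨a, b, ha, hb, hab⟩
  obtain ⟨a1, a2, a3, a4, a5⟩ := prismIneqs_of_toR3_mem_prismP ha
  obtain ⟨b1, b2, b3, b4, b5⟩ := prismIneqs_of_toR3_mem_prismP hb
  have h0 := congrFun hab 0
  have h1 := congrFun hab 1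
  have h2 := congrFun hab 2
  simp only [Pi.add_apply, Matrix.cons_val] at h0 h1 h2
  omega

theorem toR3_one_one_one_mem_two_smul_prismP : toR3 ![1, 1, 1] ∈ (2 : ℝ) • prismP := by
  refine ⟨![1/2, 1/2, 1/2], ?_, by ext i; fin_cases i <;> norm_num [toR3]⟩
  -- `5/6` times the centroid of the top triangle plus `1/6` times that of the bottom one.
  convert sum_smul_prismVertices_mem_prismP (w := ![5/18, 5/18, 5/18, 1/18, 1/18, 1/18])
    (by intro i; fin_cases i <;> norm_num) (by simp [Fin.sum_univ_six]; norm_num) using 1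
  ext i; fin_cases i <;> simp [Fin.sum_univ_six, prismVertices] <;> norm_num

theorem IsUnimodularTet.exists_isUnimodularSimplex {S : Set (Fin 3 → ℝ)}
    (hS : IsUnimodularTet S) : ∃ v : Fin 4 → Fin 3 → ℤ,
      IsUnimodularSimplex v ∧ S = convexHull ℝ (range fun i => toR3 (v i)) := by
  obtain ⟨v, rfl, hdet⟩ := hS
  refine ⟨v, ?_, ?_⟩
  · rw [IsUnimodularSimplex]
    convert Int.isUnit_iff.mpr hdet using 3
    ext i; fin_cases i <;> rfl
  · congr 1
    ext x; simp [Fin.exists_fin_succ, eq_comm]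

theorem not_isIDP3_prismP : ¬ IsIDP3 prismP := by
  intro h
  obtain ⟨f, hf, hsum⟩ := h 2 two_pos ![1, 1, 1]
    (by exact_mod_cast toR3_one_one_one_mem_two_smul_prismP)
  exact not_exists_toR3_mem_prismP_add_eq_one_one_one
    ⟨f 0, f 1, hf 0, hf 1, by rw [hsum, Fin.sum_univ_two]⟩

theorem not_hasUnimodularCover_prismP : ¬ HasUnimodularCover prismP := by
  rintro ⟨𝒞, h𝒞, hcover⟩
  obtain ⟨x, hxP, hx⟩ := toR3_one_one_one_mem_two_smul_prismP
  obtain ⟨S, hS𝒞, hxS⟩ : x ∈ ⋃₀ 𝒞 := hcover ▸ hxP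
  obtain ⟨hS, hSP⟩ := h𝒞 S hS𝒞
  obtain ⟨v, hv, rfl⟩ := hS.exists_isUnimodularSimplex
  have hvP : ∀ i, toR3 (v i) ∈ prismP := fun i => hSP (subset_convexHull ℝ _ ⟨i, rfl⟩)
  obtain ⟨i, j, hij⟩ := hv.exists_add_eq_of_two_smul_mem_convexHull hxS hx
  exact not_exists_toR3_mem_prismP_add_eq_one_one_one ⟨v i, v j, hvP i, hvP j, hij⟩

/-- The triangular prism `P` of the paper: its only lattice points are its six
vertices and the origin; `(1,1,1)` lies in `2P ∩ ℤ³` but is not a sum of two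
lattice points of `P`.  In particular `P` is not IDP and has no unimodular
cover. -/
theorem triangular_prism_not_IDP :
    prismP ∩ Lat3 =
      ({![0,1,1], ![1,0,1], ![1,1,0], ![-1,0,0], ![0,-1,0], ![0,0,-1], ![0,0,0]} :
        Set (Fin 3 → ℝ)) ∧
    (![1,1,1] : Fin 3 → ℝ) ∈ (2:ℝ) • prismP ∧
    (¬ ∃ x y : Fin 3 → ℝ, x ∈ prismP ∩ Lat3 ∧ y ∈ prismP ∩ Lat3 ∧
        x + y = ![1,1,1]) ∧
    ¬ IsIDP3 prismP ∧ ¬ HasUnimodularCover prismP := by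
  refine ⟨prismP_inter_Lat3, ?_, ?_, not_isIDP3_prismP, not_hasUnimodularCover_prismP⟩
  · simpa [toR3_vec3] using toR3_one_one_one_mem_two_smul_prismP
  · rintro ⟨_, _, ⟨ha, a, rfl⟩, ⟨hb, b, rfl⟩, hab⟩
    refine not_exists_toR3_mem_prismP_add_eq_one_one_one ⟨a, b, ha, hb, toR3_injective ?_⟩
    rw [toR3_add, hab, toR3_vec3]
    norm_num
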